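/- arXiv:1911.00358 — 3 statements merged into one kernel-verified Lean document; each statement's English description precedes it below -/
import Mathlib

section
/- For every integer n ≥ 2 and every α ∈ ℂ, the (n+1)-dimensional n-ary Filippov algebra C₂(α) degenerates to B; that is, the structure of B lies in the closure of the GL(V)-orbit of the structure of C₂(α). -/
open Function Submodule

/-! Common framework: `V = ℂ^{n+1}`, `n`-ary multiplications as functions
`(Fin n → V) → V`, the action of `GL(V)` on them, orbits, and the
(n+1)-dimensional n-ary Filippov algebras of Kaygorodov–Volkov, each described
as an alternating `n`-linear map by its values on the increasing tuples of
distinct standard basis vectors (0-indexed: `bt n j` is the tuple omitting `e j`). -/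

/-- The underlying space `V = ℂ^{n+1}`. -/
abbrev nV (n : ℕ) : Type := Fin (n + 1) → ℂ

/-- The `j`-th standard basis vector of `V` (0-indexed). -/
def sb (n : ℕ) (j : Fin (n + 1)) : nV n := Pi.single j 1

/-- The increasing `n`-tuple of standard basis vectors omitting `e j`. -/
def bt (n : ℕ) (j : Fin (n + 1)) : Fin n → nV n := fun k => sb n (j.succAbove k)

/-- The action of `GL(V)` (invertible linear maps) on `n`-ary multiplications:
`(g • μ)(x₁, …, xₙ) = g (μ (g⁻¹ x₁, …, g⁻¹ xₙ))`. -/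
noncomputable def glAct (n : ℕ) (g : nV n ≃ₗ[ℂ] nV n) (μ : (Fin n → nV n) → nV n) :
    (Fin n → nV n) → nV n :=
  fun x => g (μ fun i => g.symm (x i))

/-- The `GL(V)`-orbit of an `n`-ary multiplication. -/
def glOrbit (n : ℕ) (μ : (Fin n → nV n) → nV n) : Set ((Fin n → nV n) → nV n) :=
  {ν | ∃ g : nV n ≃ₗ[ℂ] nV n, ν = glAct n g μ}

/-- The algebra `B`: `[e₂, …, e_{n+1}] = e₁` (0-indexed: the tuple omitting `e 0`
maps to `e 0`), all other increasing basis products zero. -/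
def IsB (n : ℕ) (μ : AlternatingMap ℂ (nV n) (nV n) (Fin n)) : Prop :=
  μ (bt n 0) = sb n 0 ∧ ∀ j : Fin (n + 1), j ≠ 0 → μ (bt n j) = 0

/-- The algebra `C₁`: `[e₂, …, e_{n+1}] = e₁`, `[e₁, e₃, …, e_{n+1}] = e₂`. -/
def IsC1 (n : ℕ) (μ : AlternatingMap ℂ (nV n) (nV n) (Fin n)) : Prop :=
  μ (bt n 0) = sb n 0 ∧ μ (bt n 1) = sb n 1 ∧
    ∀ j : Fin (n + 1), j ≠ 0 → j ≠ 1 → μ (bt n j) = 0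

/-- The algebra `C₂(α)`: `[e₂, …, e_{n+1}] = α e₁ + e₂`, `[e₁, e₃, …, e_{n+1}] = e₂`. -/
def IsC2 (n : ℕ) (α : ℂ) (μ : AlternatingMap ℂ (nV n) (nV n) (Fin n)) : Prop :=
  μ (bt n 0) = α • sb n 0 + sb n 1 ∧ μ (bt n 1) = sb n 1 ∧
    ∀ j : Fin (n + 1), j ≠ 0 → j ≠ 1 → μ (bt n j) = 0

/-- The algebra `C₃`: `[e₁, e₃, …, e_{n+1}] = e₁`, `[e₂, e₃, …, e_{n+1}] = e₂`. -/
def IsC3 (n : ℕ) (μ : AlternatingMap ℂ (nV n) (nV n) (Fin n)) : Prop :=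
  μ (bt n 1) = sb n 0 ∧ μ (bt n 0) = sb n 1 ∧
    ∀ j : Fin (n + 1), j ≠ 0 → j ≠ 1 → μ (bt n j) = 0

/-- The algebra `D_r`: `[e₁, …, e_{i-1}, e_{i+1}, …, e_{n+1}] = e_i` for `1 ≤ i ≤ r`
(0-indexed: the tuple omitting `e j` maps to `e j` for `j < r` and to `0` otherwise). -/
def IsD (n r : ℕ) (μ : AlternatingMap ℂ (nV n) (nV n) (Fin n)) : Prop :=
  ∀ j : Fin (n + 1), ((j : ℕ) < r → μ (bt n j) = sb n j) ∧ (r ≤ (j : ℕ) → μ (bt n j) = 0)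


/-! Conjugating `C₂(α)` first by the transposition `e₁ ↔ e₂` and then by
`g_t = diag(1, t, t⁻¹, 1, …, 1)` gives the structure
`[e₂, …, e_{n+1}] = e₁`, `[e₁, e₃, …, e_{n+1}] = t e₁ + α t² e₂`, all other basis products
zero: a diagonal `g` multiplies the product of the tuple omitting `e_j` by `g_j / det g` before
applying `g`. As `t → 0` these values tend to those of `B`, and an alternating `n`-linear map on
an `(n+1)`-dimensional space is a fixed linear combination of its values on the tuples
omitting one basis vector, so the structures themselves converge to `B`. -/

open Filter Topology

theorem Fin.exists_succAbove_comp_perm {n : ℕ} {v : Fin n → Fin (n + 1)} (hv : Injective v) :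
    ∃ (j : Fin (n + 1)) (p : Equiv.Perm (Fin n)), v = j.succAbove ∘ p := by
  obtain ⟨j, hj⟩ : ∃ j, j ∉ Set.range v := by
    by_contra! h
    simpa using Fintype.card_le_of_surjective v h
  have hsub : ∀ k, v k ∈ Set.range j.succAbove := fun k => by
    rw [Fin.range_succAbove]
    exact fun h => hj ⟨k, h⟩
  choose p hp using hsub
  have hp_inj : Injective p := fun a b hab => hv (by rw [← hp a, ← hp b, hab])
  exact ⟨j, Equiv.ofBijective p (Finite.injective_iff_bijective.mp hp_inj),
    funext fun k => (hp k).symm⟩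

namespace AlternatingMap

variable {n : ℕ} {W : Type*} [NormedAddCommGroup W] [NormedSpace ℂ W]

theorem apply_eq_sum_sb (f : AlternatingMap ℂ (nV n) W (Fin n)) (x : Fin n → nV n) :
    f x = ∑ r : Fin n → Fin (n + 1), (∏ i, x i (r i)) • f (fun i => sb n (r i)) := by
  conv_lhs => rw [show x = fun i => ∑ k, x i k • sb n k from
    funext fun i => by simpa [sb] using ((Pi.basisFun ℂ (Fin (n + 1))).sum_repr (x i)).symm]
  rw [← f.coe_multilinearMap, MultilinearMap.map_sum]
  exact Finset.sum_congr rfl fun r _ => f.map_smul_univ _ _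

theorem tendsto_coe_of_tendsto_apply_bt {ι : Type*} {l : Filter ι}
    {f : ι → AlternatingMap ℂ (nV n) W (Fin n)} {g : AlternatingMap ℂ (nV n) W (Fin n)}
    (h : ∀ j, Tendsto (fun i => f i (bt n j)) l (𝓝 (g (bt n j)))) :
    Tendsto (fun i => ⇑(f i)) l (𝓝 ⇑g) := by
  have hsb : ∀ r : Fin n → Fin (n + 1),
      Tendsto (fun i => f i fun k => sb n (r k)) l (𝓝 (g fun k => sb n (r k))) := by
    intro r
    by_cases hr : Injective r
    · obtain ⟨j, p, rfl⟩ := Fin.exists_succAbove_comp_perm hr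
      change Tendsto (fun i => f i (bt n j ∘ p)) l (𝓝 (g (bt n j ∘ p)))
      simp only [map_perm]
      exact (h j).const_smul _
    · have hr' : ¬Injective fun k => sb n (r k) := fun h => hr (h.of_comp (f := sb n))
      simp only [map_eq_zero_of_not_injective _ _ hr', tendsto_const_nhds]
  rw [tendsto_pi_nhds]
  intro x
  simp only [apply_eq_sum_sb _ x]
  exact tendsto_finsetSum _ fun r _ => (hsb r).const_smul _

end AlternatingMap

section Action

variable {n : ℕ} (g h : nV n ≃ₗ[ℂ] nV n) (μ : AlternatingMap ℂ (nV n) (nV n) (Fin n))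

def glActAlt : AlternatingMap ℂ (nV n) (nV n) (Fin n) :=
  (g : nV n →ₗ[ℂ] nV n).compAlternatingMap (μ.compLinearMap g.symm)

theorem coe_glActAlt : ⇑(glActAlt g μ) = glAct n g μ := rfl

theorem glActAlt_trans : glActAlt (g.trans h) μ = glActAlt h (glActAlt g μ) := rfl

theorem glActAlt_apply_bt (j : Fin (n + 1)) :
    glActAlt g μ (bt n j) = g (μ fun k => g.symm (bt n j k)) := rfl

end Action

section Swap

variable {n : ℕ}

theorem Fin.swap_zero_one_comp_succAbove_zero :
    Equiv.swap (0 : Fin (n + 2)) 1 ∘ Fin.succAbove 0 = Fin.succAbove 1 := by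
  funext k
  cases k using Fin.cases <;> simp [Equiv.swap_apply_of_ne_of_ne, Fin.succ_succ_ne_one]

theorem Fin.swap_zero_one_comp_succAbove_one :
    Equiv.swap (0 : Fin (n + 2)) 1 ∘ Fin.succAbove 1 = Fin.succAbove 0 := by
  rw [← Fin.swap_zero_one_comp_succAbove_zero]
  funext k
  simp

theorem Fin.swap_zero_one_comp_succAbove {j : Fin (n + 2)} (h0 : j ≠ 0) (h1 : j ≠ 1) :
    Equiv.swap 0 1 ∘ j.succAbove = j.succAbove ∘ Equiv.swap 0 1 := by
  have hj1 : j.succAbove 1 = 1 := by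
    rcases n with _ | n
    · fin_cases j <;> simp_all
    · refine Fin.succAbove_of_castSucc_lt _ _ ?_
      rw [Fin.lt_def]
      simp only [ne_eq, Fin.ext_iff, Fin.val_zero, Fin.val_one, Fin.val_castSucc] at h0 h1 ⊢
      omega
  funext k
  simp only [comp_apply, Fin.succAbove_right_injective.map_swap, Fin.succAbove_ne_zero_zero h0,
    hj1]

def swapEquiv (n : ℕ) : nV (n + 1) ≃ₗ[ℂ] nV (n + 1) :=
  LinearEquiv.funCongrLeft ℂ ℂ (Equiv.swap 0 1)

theorem swapEquiv_sb (k : Fin (n + 2)) :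
    swapEquiv n (sb (n + 1) k) = sb (n + 1) (Equiv.swap 0 1 k) := by
  funext i
  simp [swapEquiv, sb, LinearEquiv.funCongrLeft_apply, LinearMap.funLeft_apply, Pi.single_apply,
    Equiv.swap_apply_eq_iff]

theorem swapEquiv_symm : (swapEquiv n).symm = swapEquiv n := by
  ext x i
  simp [swapEquiv, LinearEquiv.funCongrLeft_symm]

theorem swapEquiv_symm_bt (j : Fin (n + 2)) (k : Fin (n + 1)) :
    (swapEquiv n).symm (bt (n + 1) j k) = sb (n + 1) (Equiv.swap 0 1 (j.succAbove k)) := by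
  rw [swapEquiv_symm, bt, swapEquiv_sb]

variable (μ : AlternatingMap ℂ (nV (n + 1)) (nV (n + 1)) (Fin (n + 1)))

theorem glActAlt_swapEquiv_bt_zero :
    glActAlt (swapEquiv n) μ (bt (n + 1) 0) = swapEquiv n (μ (bt (n + 1) 1)) := by
  simp only [glActAlt_apply_bt, swapEquiv_symm_bt]
  rw [show (fun k => sb (n + 1) (Equiv.swap 0 1 (Fin.succAbove 0 k))) = bt (n + 1) 1
    from congrArg (sb (n + 1) ∘ ·) Fin.swap_zero_one_comp_succAbove_zero]

theorem glActAlt_swapEquiv_bt_one :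
    glActAlt (swapEquiv n) μ (bt (n + 1) 1) = swapEquiv n (μ (bt (n + 1) 0)) := by
  simp only [glActAlt_apply_bt, swapEquiv_symm_bt]
  rw [show (fun k => sb (n + 1) (Equiv.swap 0 1 (Fin.succAbove 1 k))) = bt (n + 1) 0
    from congrArg (sb (n + 1) ∘ ·) Fin.swap_zero_one_comp_succAbove_one]

theorem glActAlt_swapEquiv_bt_of_ne {j : Fin (n + 2)} (h0 : j ≠ 0) (h1 : j ≠ 1) :
    glActAlt (swapEquiv n) μ (bt (n + 1) j) = -swapEquiv n (μ (bt (n + 1) j)) := by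
  have h01 : (0 : Fin (n + 1)) ≠ 1 := by
    rcases n with _ | n
    · fin_cases j <;> simp_all
    · simp
  simp only [glActAlt_apply_bt, swapEquiv_symm_bt]
  rw [show (fun k => sb (n + 1) (Equiv.swap 0 1 (j.succAbove k))) = bt (n + 1) j ∘ Equiv.swap 0 1
    from congrArg (sb (n + 1) ∘ ·) (Fin.swap_zero_one_comp_succAbove h0 h1), μ.map_swap _ h01,
    map_neg]

end Swap

section Diagonal

variable {n : ℕ}

def diagEquiv (d : Fin (n + 1) → ℂˣ) : nV n ≃ₗ[ℂ] nV n :=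
  LinearEquiv.piCongrRight fun i => LinearEquiv.smulOfUnit (d i)

theorem diagEquiv_sb (d : Fin (n + 1) → ℂˣ) (k : Fin (n + 1)) :
    diagEquiv d (sb n k) = (d k : ℂ) • sb n k := by
  funext i
  by_cases h : i = k
  · subst h
    simp [diagEquiv, sb, LinearEquiv.smulOfUnit, Units.smul_def]
  · simp [diagEquiv, sb, h]

theorem diagEquiv_symm (d : Fin (n + 1) → ℂˣ) : (diagEquiv d).symm = diagEquiv d⁻¹ := rfl

theorem glActAlt_diagEquiv_bt (d : Fin (n + 1) → ℂˣ)
    (μ : AlternatingMap ℂ (nV n) (nV n) (Fin n)) (j : Fin (n + 1)) :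
    glActAlt (diagEquiv d) μ (bt n j) =
      ((d j / ∏ i, d i : ℂˣ) : ℂ) • diagEquiv d (μ (bt n j)) := by
  have hsymm : (fun k => (diagEquiv d).symm (bt n j k)) =
      fun k => (((d (j.succAbove k))⁻¹ : ℂˣ) : ℂ) • bt n j k := by
    funext k
    rw [diagEquiv_symm, bt, diagEquiv_sb]
    rfl
  rw [glActAlt_apply_bt, hsymm, μ.map_smul_univ, map_smul, Fin.prod_univ_succAbove _ j]
  congr 1
  simp [div_eq_mul_inv, Finset.prod_inv_distrib]

end Diagonal

section Degeneration

variable {m : ℕ}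

def c2Weights (m : ℕ) (t : ℂˣ) : Fin (m + 3) → ℂˣ :=
  Pi.mulSingle 1 t * Pi.mulSingle 2 t⁻¹

theorem prod_c2Weights (t : ℂˣ) : ∏ i, c2Weights m t i = 1 := by
  simp [c2Weights, Finset.prod_mul_distrib, Finset.prod_pi_mulSingle']

theorem c2Weights_zero (t : ℂˣ) : c2Weights m t 0 = 1 := by
  simp [c2Weights, Fin.ext_iff, Nat.mod_eq_of_lt (show 2 < m + 3 by omega)]

theorem c2Weights_one (t : ℂˣ) : c2Weights m t 1 = t := by
  simp [c2Weights, Fin.ext_iff, Nat.mod_eq_of_lt (show 2 < m + 3 by omega)]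

def c2Degeneration (m : ℕ) (t : ℂˣ) : nV (m + 2) ≃ₗ[ℂ] nV (m + 2) :=
  (swapEquiv (m + 1)).trans (diagEquiv (c2Weights m t))

variable {α : ℂ} {μ : AlternatingMap ℂ (nV (m + 2)) (nV (m + 2)) (Fin (m + 2))}

theorem IsC2.glActAlt_c2Degeneration_bt_zero (hμ : IsC2 (m + 2) α μ) (t : ℂˣ) :
    glActAlt (c2Degeneration m t) μ (bt (m + 2) 0) = sb (m + 2) 0 := by
  rw [c2Degeneration, glActAlt_trans, glActAlt_diagEquiv_bt, glActAlt_swapEquiv_bt_zero, hμ.2.1,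
    swapEquiv_sb, Equiv.swap_apply_right, diagEquiv_sb, prod_c2Weights, c2Weights_zero]
  simp

theorem IsC2.glActAlt_c2Degeneration_bt_one (hμ : IsC2 (m + 2) α μ) (t : ℂˣ) :
    glActAlt (c2Degeneration m t) μ (bt (m + 2) 1) =
      (t : ℂ) • (sb (m + 2) 0 + (α * t) • sb (m + 2) 1) := by
  rw [c2Degeneration, glActAlt_trans, glActAlt_diagEquiv_bt, glActAlt_swapEquiv_bt_one, hμ.1,
    map_add, map_smul, swapEquiv_sb, swapEquiv_sb, Equiv.swap_apply_left, Equiv.swap_apply_right,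
    map_add, map_smul, diagEquiv_sb, diagEquiv_sb, prod_c2Weights, c2Weights_zero, c2Weights_one]
  simp [smul_smul, add_comm]

theorem IsC2.glActAlt_c2Degeneration_bt_of_ne (hμ : IsC2 (m + 2) α μ) (t : ℂˣ)
    {j : Fin (m + 3)} (h0 : j ≠ 0) (h1 : j ≠ 1) :
    glActAlt (c2Degeneration m t) μ (bt (m + 2) j) = 0 := by
  rw [c2Degeneration, glActAlt_trans, glActAlt_diagEquiv_bt, glActAlt_swapEquiv_bt_of_ne _ h0 h1,
    hμ.2.2 j h0 h1]
  simp

end Degeneration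

/-- For every integer `n ≥ 2` and every `α ∈ ℂ`, the algebra `C₂(α)`
degenerates to `B`. -/
theorem C2_degenerates_to_B (n : ℕ) (hn : 2 ≤ n) (α : ℂ)
    (μ ν : AlternatingMap ℂ (nV n) (nV n) (Fin n)) (hμ : IsC2 n α μ) (hν : IsB n ν) :
    ⇑ν ∈ closure (glOrbit n ⇑μ) := by
  obtain ⟨m, rfl⟩ : ∃ m, n = m + 2 := ⟨n - 2, by omega⟩
  let u : ℕ → ℂˣ := fun k => (Units.mk0 ((k : ℂ) + 1) (Nat.cast_add_one_ne_zero k))⁻¹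
  have hu : Tendsto (fun k => (u k : ℂ)) atTop (𝓝 0) := by
    simpa [u, comp_def] using
      (tendsto_inv_atTop_nhds_zero_nat (𝕜 := ℂ)).comp (tendsto_add_atTop_nat 1)
  refine mem_closure_of_tendsto (b := atTop) (f := fun k => glActAlt (c2Degeneration m (u k)) μ)
    (AlternatingMap.tendsto_coe_of_tendsto_apply_bt fun j => ?_)
    (Eventually.of_forall fun k => ⟨_, coe_glActAlt _ _⟩)
  by_cases h0 : j = 0
  · subst h0
    simp only [hμ.glActAlt_c2Degeneration_bt_zero, hν.1, tendsto_const_nhds]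
  by_cases h1 : j = 1
  · subst h1
    simp only [hμ.glActAlt_c2Degeneration_bt_one, hν.2 1 h0]
    have hφ : Continuous fun t : ℂ => t • (sb (m + 2) 0 + (α * t) • sb (m + 2) 1) := by
      fun_prop
    simpa [comp_def] using (hφ.tendsto 0).comp hu
  · simp only [hμ.glActAlt_c2Degeneration_bt_of_ne _ h0 h1, hν.2 j h0, tendsto_const_nhds]
end

section
/- For every integer n ≥ 2 and every α ∈ ℂ with α ≠ −1/4, the (n+1)-dimensional n-ary Filippov algebra C₂(α) does not degenerate to C₃; that is, the structure of C₃ does not lie in the closure of the GL(V)-orbit of the structure of C₂(α). -/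
open Function Submodule

/-! For a multiplication `f` and a tuple `y`, let `L_y = f(·, y₂, …, yₙ)`, recorded by its matrix
so that it makes sense at every point of the orbit closure, not only for multilinear `f`.
The identity `tr (L_y L_z) = c · tr L_y · tr L_z` (for all `y`, `z`) is a closed condition and,
for multilinear `f`, it is `GL(V)`-invariant since `g • f` only conjugates `L_y`.
For `C₂(α)` it holds with `c = 1 + 2α`: `L_y` factors through `ℂ²` via
`x ↦ (det(e₁, x, y₂, …), det(e₂, x, y₂, …))`, and the composite in the other order is
`det(e₁, e₂, y₂, …) · [[1, -1], [-α, 0]]`, a matrix of trace `1` whose square has trace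
`1 + 2α`. For `C₃` and `y = (·, e₃, …, e_{n+1})`, `L_y` is the projection onto `span(e₁, e₂)`, which
forces `2 = 4c`, i.e. `α = -1/4`. -/

open Matrix

section

variable {n : ℕ}

theorem bt_one_zero (m : ℕ) : bt (m + 1) 1 0 = sb (m + 1) 0 := by
  simp [bt, Fin.succAbove]

theorem update_bt_one_zero (m : ℕ) : update (bt (m + 1) 1) 0 (sb (m + 1) 1) = bt (m + 1) 0 := by
  funext k
  refine Fin.cases (by simp [bt]) (fun k => ?_) k
  simp [bt, Fin.succAbove, Fin.lt_def]

theorem AlternatingMap.map_update_bt_eq_zero {N : Type*} [AddCommGroup N] [Module ℂ N]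
    (f : AlternatingMap ℂ (nV n) N (Fin n)) {i : Fin n} {j k : Fin (n + 1)} (hjk : j ≠ k)
    (hji : j ≠ k.succAbove i) : f (update (bt n k) i (sb n j)) = 0 := by
  obtain ⟨i', hi'⟩ := Fin.exists_succAbove_eq hjk
  have hii' : i ≠ i' := by rintro rfl; exact hji hi'.symm
  refine f.map_eq_zero_of_eq _ (i := i) (j := i') ?_ hii'
  simp [Function.update_of_ne hii'.symm, bt, hi']

theorem AlternatingMap.ext_bt {N : Type*} [AddCommGroup N] [Module ℂ N]
    {f g : AlternatingMap ℂ (nV n) N (Fin n)} (h : ∀ j, f (bt n j) = g (bt n j)) : f = g := by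
  refine Module.Basis.ext_alternating (Pi.basisFun ℂ (Fin (n + 1))) fun v hv => ?_
  obtain ⟨j, hj⟩ : ∃ j, ∀ i, v i ≠ j := by
    by_contra! hsurj
    simpa using Fintype.card_le_of_surjective v hsurj
  choose u hu using fun i => Fin.exists_succAbove_eq (hj i)
  have hu_bij : Bijective u :=
    Finite.injective_iff_bijective.mp fun a b hab => hv (by rw [← hu a, ← hu b, hab])
  have hv_eq :
      (fun i => Pi.basisFun ℂ (Fin (n + 1)) (v i)) = bt n j ∘ Equiv.ofBijective u hu_bij := by
    funext i
    simp [bt, sb, hu]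
  rw [hv_eq, f.map_perm, g.map_perm, h]

namespace AlternatingMap

variable {R M N : Type*} [Semiring R] [AddCommGroup M] [Module R M] [AddCommGroup N] [Module R N]
  {m : ℕ}

theorem map_update_cons_self (f : AlternatingMap R M N (Fin (m + 2))) (a : M)
    (y : Fin (m + 1) → M) : f (update (Fin.cons a y) 1 a) = 0 :=
  f.map_eq_zero_of_eq _ (i := 0) (j := 1) (by simp) zero_ne_one

theorem map_update_cons_swap (f : AlternatingMap R M N (Fin (m + 2))) (a b : M)
    (y : Fin (m + 1) → M) : f (update (Fin.cons a y) 1 b) = -f (update (Fin.cons b y) 1 a) := by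
  rw [← f.map_swap (update (Fin.cons b y) 1 a) (zero_ne_one (α := Fin (m + 2)))]
  congr 1
  funext k
  refine Fin.cases ?_ (fun k => Fin.cases ?_ (fun k => ?_) k) k
  · simp
  · simp
  · simp [Equiv.swap_apply_of_ne_of_ne, Fin.succ_succ_ne_one]

end AlternatingMap

theorem detRowAlternating_cons_sb_bt_of_ne {j k : Fin (n + 1)} (h : j ≠ k) :
    detRowAlternating (Fin.cons (sb n j) (bt n k) : Fin (n + 1) → nV n) = 0 := by
  obtain ⟨i, hi⟩ := Fin.exists_succAbove_eq h
  exact detRowAlternating.map_eq_zero_of_eq _ (i := 0) (j := i.succ) (by simp [bt, hi])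
    (Fin.succ_ne_zero i).symm

theorem detRowAlternating_cons_sb_zero_bt_zero :
    detRowAlternating (Fin.cons (sb n 0) (bt n 0) : Fin (n + 1) → nV n) = 1 := by
  have h : (Fin.cons (sb n 0) (bt n 0) : Fin (n + 1) → nV n) = (1 : Matrix _ _ ℂ) := by
    ext k : 1
    refine Fin.cases ?_ (fun k => ?_) k <;> ext a <;> simp [bt, sb, one_eq_pi_single]
  rw [h]
  exact det_one

theorem detRowAlternating_cons_sb_one_bt_one (m : ℕ) :
    detRowAlternating (Fin.cons (sb (m + 1) 1) (bt (m + 1) 1) : Fin (m + 2) → nV (m + 1)) =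
      -1 := by
  have h := Fin.cons_update (α := fun _ => nV (m + 1)) (sb (m + 1) 0) (bt (m + 1) 1) 0
    (sb (m + 1) 1)
  rw [Fin.succ_zero_eq_one] at h
  rw [← update_eq_self 0 (bt (m + 1) 1), bt_one_zero, Fin.cons_update, Fin.succ_zero_eq_one,
    AlternatingMap.map_update_cons_swap, ← h, update_bt_one_zero,
    detRowAlternating_cons_sb_zero_bt_zero]

def slotMatrix (f : (Fin n → nV n) → nV n) (i : Fin n) (y : Fin n → nV n) :
    Matrix (Fin (n + 1)) (Fin (n + 1)) ℂ :=
  Matrix.of fun a b => f (update y i (sb n b)) a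

def traceRelation (c : ℂ) (i : Fin n) : Set ((Fin n → nV n) → nV n) :=
  {f | ∀ y z, (slotMatrix f i y * slotMatrix f i z).trace =
    c * ((slotMatrix f i y).trace * (slotMatrix f i z).trace)}

theorem isClosed_traceRelation (c : ℂ) (i : Fin n) : IsClosed (traceRelation c i) := by
  have hM : ∀ y, Continuous fun f : (Fin n → nV n) → nV n => slotMatrix f i y := fun y =>
    continuous_matrix fun a b => (continuous_apply a).comp (continuous_apply _)
  simp only [traceRelation, Set.ofPred_forall]
  exact isClosed_iInter fun y => isClosed_iInter fun z =>
    isClosed_eq ((hM y).matrix_mul (hM z)).matrix_trace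
      (continuous_const.mul ((hM y).matrix_trace.mul (hM z).matrix_trace))

theorem slotMatrix_eq_toMatrix' (μ : MultilinearMap ℂ (fun _ : Fin n => nV n) (nV n))
    (i : Fin n) (y : Fin n → nV n) :
    slotMatrix μ i y = LinearMap.toMatrix' (μ.toLinearMap y i) := by
  ext a b
  simp [slotMatrix, LinearMap.toMatrix'_apply, sb]

theorem trace_toMatrix' {R ι : Type*} [CommRing R] [Fintype ι] [DecidableEq ι]
    (f : (ι → R) →ₗ[R] ι → R) :
    (LinearMap.toMatrix' f).trace = LinearMap.trace R _ f := by
  rw [LinearMap.trace_eq_matrix_trace R (Pi.basisFun R ι), LinearMap.toMatrix_eq_toMatrix']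

theorem mem_traceRelation_iff (μ : MultilinearMap ℂ (fun _ : Fin n => nV n) (nV n))
    (c : ℂ) (i : Fin n) :
    ⇑μ ∈ traceRelation c i ↔ ∀ y z,
      LinearMap.trace ℂ _ (μ.toLinearMap y i ∘ₗ μ.toLinearMap z i) =
        c * (LinearMap.trace ℂ _ (μ.toLinearMap y i) *
          LinearMap.trace ℂ _ (μ.toLinearMap z i)) := by
  simp only [traceRelation, Set.mem_ofPred_eq, slotMatrix_eq_toMatrix',
    ← LinearMap.toMatrix'_comp, trace_toMatrix']

theorem glAct_eq_compMultilinearMap (g : nV n ≃ₗ[ℂ] nV n)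
    (μ : MultilinearMap ℂ (fun _ : Fin n => nV n) (nV n)) :
    glAct n g μ = ⇑((g : nV n →ₗ[ℂ] nV n).compMultilinearMap
      (μ.compLinearMap fun _ => (g.symm : nV n →ₗ[ℂ] nV n))) :=
  rfl

theorem toLinearMap_glAct (g : nV n ≃ₗ[ℂ] nV n)
    (μ : MultilinearMap ℂ (fun _ : Fin n => nV n) (nV n)) (i : Fin n) (y : Fin n → nV n) :
    ((g : nV n →ₗ[ℂ] nV n).compMultilinearMap
      (μ.compLinearMap fun _ => (g.symm : nV n →ₗ[ℂ] nV n))).toLinearMap y i =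
      g.conj (μ.toLinearMap (g.symm ∘ y) i) := by
  refine LinearMap.ext fun x => ?_
  simp only [MultilinearMap.toLinearMap_apply, LinearMap.compMultilinearMap_apply,
    MultilinearMap.compLinearMap_apply, LinearEquiv.conj_apply, LinearMap.comp_apply,
    LinearEquiv.coe_coe]
  rw [← Function.comp_update]
  rfl

theorem glAct_mem_traceRelation {c : ℂ} {i : Fin n}
    {μ : MultilinearMap ℂ (fun _ : Fin n => nV n) (nV n)} (h : ⇑μ ∈ traceRelation c i)
    (g : nV n ≃ₗ[ℂ] nV n) : glAct n g μ ∈ traceRelation c i := by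
  rw [mem_traceRelation_iff] at h
  rw [glAct_eq_compMultilinearMap, mem_traceRelation_iff]
  intro y z
  simp only [toLinearMap_glAct, ← LinearEquiv.conj_comp, LinearMap.trace_conj']
  exact h _ _

theorem closure_glOrbit_subset_traceRelation {c : ℂ} {i : Fin n}
    {μ : MultilinearMap ℂ (fun _ : Fin n => nV n) (nV n)} (h : ⇑μ ∈ traceRelation c i) :
    closure (glOrbit n μ) ⊆ traceRelation c i :=
  closure_minimal (by rintro _ ⟨g, rfl⟩; exact glAct_mem_traceRelation h g)
    (isClosed_traceRelation c i)

end

section C3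

variable {m : ℕ} {ν : AlternatingMap ℂ (nV (m + 1)) (nV (m + 1)) (Fin (m + 1))}

theorem IsC3.map_update_bt_one (hν : IsC3 (m + 1) ν) (j : Fin (m + 2)) :
    ν (update (bt (m + 1) 1) 0 (sb (m + 1) j)) =
      (Pi.single 0 1 + Pi.single 1 1 : Fin (m + 2) → ℂ) j • sb (m + 1) j := by
  by_cases hj0 : j = 0
  · subst hj0
    rw [← bt_one_zero, update_eq_self, hν.1, bt_one_zero]
    simp
  by_cases hj1 : j = 1
  · subst hj1
    rw [update_bt_one_zero, hν.2.1]
    simp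
  · rw [ν.map_update_bt_eq_zero hj1 (by simpa [Fin.succAbove] using hj0)]
    simp [hj0, hj1]

theorem IsC3.slotMatrix_bt_one (hν : IsC3 (m + 1) ν) :
    slotMatrix ν 0 (bt (m + 1) 1) = diagonal (Pi.single 0 1 + Pi.single 1 1) := by
  ext a b
  rw [slotMatrix, of_apply, hν.map_update_bt_one]
  rcases eq_or_ne a b with rfl | hab <;> simp [sb, *]

theorem IsC3.eq_half_of_mem_traceRelation (hν : IsC3 (m + 1) ν) {c : ℂ}
    (h : ⇑ν ∈ traceRelation c 0) : c = 1 / 2 := by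
  have key := h (bt (m + 1) 1) (bt (m + 1) 1)
  have hd : (fun a => (Pi.single 0 1 + Pi.single 1 1 : Fin (m + 2) → ℂ) a *
      (Pi.single 0 1 + Pi.single 1 1 : Fin (m + 2) → ℂ) a) = Pi.single 0 1 + Pi.single 1 1 := by
    funext a
    by_cases ha0 : a = 0 <;> by_cases ha1 : a = 1 <;> simp_all
  rw [hν.slotMatrix_bt_one, diagonal_mul_diagonal', hd] at key
  simp [Finset.sum_add_distrib] at key
  linear_combination -key / 4

end C3

section C2

variable {m : ℕ} {α : ℂ} {μ : AlternatingMap ℂ (nV (m + 1)) (nV (m + 1)) (Fin (m + 1))}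

theorem IsC2.apply_eq (hμ : IsC2 (m + 1) α μ) (x : Fin (m + 1) → nV (m + 1)) :
    μ x = detRowAlternating (Fin.cons (sb (m + 1) 0) x) • (α • sb (m + 1) 0 + sb (m + 1) 1)
      - detRowAlternating (Fin.cons (sb (m + 1) 1) x) • sb (m + 1) 1 := by
  let ω := (detRowAlternating : AlternatingMap ℂ (nV (m + 1)) ℂ (Fin (m + 2))).curryLeft
  suffices h : μ =
      (LinearMap.toSpanSingleton ℂ _ (α • sb (m + 1) 0 + sb (m + 1) 1)).compAlternatingMap
        (ω (sb (m + 1) 0)) -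
      (LinearMap.toSpanSingleton ℂ _ (sb (m + 1) 1)).compAlternatingMap (ω (sb (m + 1) 1)) by
    rw [h]; rfl
  refine AlternatingMap.ext_bt fun j => ?_
  simp only [AlternatingMap.sub_apply, LinearMap.compAlternatingMap_apply,
    LinearMap.toSpanSingleton_apply, ω, AlternatingMap.curryLeft_apply_apply, vecCons]
  by_cases hj0 : j = 0
  · subst hj0
    rw [hμ.1, detRowAlternating_cons_sb_zero_bt_zero,
      detRowAlternating_cons_sb_bt_of_ne one_ne_zero]
    simp
  by_cases hj1 : j = 1
  · subst hj1
    rw [hμ.2.1, detRowAlternating_cons_sb_one_bt_one,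
      detRowAlternating_cons_sb_bt_of_ne zero_ne_one]
    simp
  · rw [hμ.2.2 j hj0 hj1, detRowAlternating_cons_sb_bt_of_ne (Ne.symm hj0),
      detRowAlternating_cons_sb_bt_of_ne (Ne.symm hj1)]
    simp

variable (m) in
def detConsPair (y : Fin (m + 1) → nV (m + 1)) : nV (m + 1) →ₗ[ℂ] Fin 2 → ℂ :=
  LinearMap.pi fun k =>
    ((detRowAlternating : AlternatingMap ℂ (nV (m + 1)) ℂ (Fin (m + 2))).curryLeft
      (![sb (m + 1) 0, sb (m + 1) 1] k)).toMultilinearMap.toLinearMap y 0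

theorem detConsPair_apply (y : Fin (m + 1) → nV (m + 1)) (x : nV (m + 1)) (k : Fin 2) :
    detConsPair m y x k =
      detRowAlternating (Fin.cons (![sb (m + 1) 0, sb (m + 1) 1] k) (update y 0 x) :
        Fin (m + 2) → nV (m + 1)) :=
  rfl

variable (m α) in
def c2Combination : (Fin 2 → ℂ) →ₗ[ℂ] nV (m + 1) :=
  Fintype.linearCombination ℂ ![α • sb (m + 1) 0 + sb (m + 1) 1, -sb (m + 1) 1]

theorem c2Combination_apply (c : Fin 2 → ℂ) :
    c2Combination m α c = c 0 • (α • sb (m + 1) 0 + sb (m + 1) 1) - c 1 • sb (m + 1) 1 := by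
  simp [c2Combination, Fintype.linearCombination_apply, sub_eq_add_neg]

theorem IsC2.toLinearMap_eq (hμ : IsC2 (m + 1) α μ) (y : Fin (m + 1) → nV (m + 1)) :
    μ.toMultilinearMap.toLinearMap y 0 = c2Combination m α ∘ₗ detConsPair m y := by
  refine LinearMap.ext fun x => ?_
  rw [LinearMap.comp_apply, c2Combination_apply, detConsPair_apply, detConsPair_apply]
  exact hμ.apply_eq _

theorem detConsPair_comp_c2Combination (y : Fin (m + 1) → nV (m + 1)) :
    detConsPair m y ∘ₗ c2Combination m α =
      detRowAlternating (update (Fin.cons (sb (m + 1) 0) y) 1 (sb (m + 1) 1)) •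
        toLin' !![1, -1; -α, 0] := by
  ext l k
  fin_cases l <;> fin_cases k <;>
    simp [c2Combination_apply, detConsPair_apply, AlternatingMap.map_update_cons_self,
      detRowAlternating.map_update_cons_swap (sb (m + 1) 1) (sb (m + 1) 0) y, mul_comm]

theorem IsC2.mem_traceRelation (hμ : IsC2 (m + 1) α μ) :
    ⇑μ ∈ traceRelation (1 + 2 * α) 0 := by
  refine (mem_traceRelation_iff μ.toMultilinearMap _ _).2 fun y z => ?_
  set U := c2Combination m α
  have hcycle :
      LinearMap.trace ℂ _ ((U ∘ₗ detConsPair m y) ∘ₗ (U ∘ₗ detConsPair m z)) =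
      LinearMap.trace ℂ _ ((detConsPair m y ∘ₗ U) ∘ₗ (detConsPair m z ∘ₗ U)) := by
    simp only [LinearMap.comp_assoc]
    exact LinearMap.trace_comp_comm' _ _
  rw [hμ.toLinearMap_eq, hμ.toLinearMap_eq, hcycle, LinearMap.trace_comp_comm' _ U,
    LinearMap.trace_comp_comm' _ U, detConsPair_comp_c2Combination,
    detConsPair_comp_c2Combination, LinearMap.smul_comp, LinearMap.comp_smul, ← toLin'_mul]
  simp [trace_fin_two]
  ring

end C2

/-- For every integer `n ≥ 2` and every `α ≠ -1/4`, the algebra `C₂(α)` does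
not degenerate to `C₃`. -/
theorem C2_not_degenerates_to_C3 (n : ℕ) (hn : 2 ≤ n) (α : ℂ) (hα : α ≠ -(1 / 4))
    (μ ν : AlternatingMap ℂ (nV n) (nV n) (Fin n)) (hμ : IsC2 n α μ) (hν : IsC3 n ν) :
    ⇑ν ∉ closure (glOrbit n ⇑μ) := by
  obtain ⟨m, rfl⟩ : ∃ m, n = m + 1 := ⟨n - 1, by omega⟩
  intro hν_mem
  have hc := hν.eq_half_of_mem_traceRelation
    (closure_glOrbit_subset_traceRelation hμ.mem_traceRelation hν_mem)
  exact hα (by linear_combination hc / 2)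
end

section
/- For every integer n ≥ 2, an invertible linear map φ : V → V is an automorphism of the algebra B if and only if φ(e₁) ∈ span{e₁} and, writing φ(e₁) = λ e₁, the scalar λ equals the determinant of the endomorphism of V/span{e₁} induced by φ. Consequently the automorphism group of B has dimension n² + n. -/
open Function Submodule

/-- The automorphism group of the multiplication `μ`, realized as the set of invertible
`(n+1) × (n+1)` matrices `A` with `A (μ x) = μ (A x₁, …, A xₙ)`, topologized as a subspace
of the matrix space. -/
def AutMat (n : ℕ) (μ : AlternatingMap ℂ (nV n) (nV n) (Fin n)) : Type :=
  {A : Matrix (Fin (n + 1)) (Fin (n + 1)) ℂ // IsUnit A.det ∧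
    ∀ x : Fin n → nV n, A.mulVec (μ x) = μ fun i => A.mulVec (x i)}

noncomputable instance (n : ℕ) (μ : AlternatingMap ℂ (nV n) (nV n) (Fin n)) : TopologicalSpace (AutMat n μ) :=
  instTopologicalSpaceSubtype

/-! The defining relations of `B` force `μ x = det (x̄₁, …, x̄ₙ) • e₁`, where `x̄ᵢ` is the image
of `xᵢ` in `V ⧸ span {e₁}`, since both sides are alternating and agree on basis tuples. For `φ`
preserving `span {e₁}`, `μ (φ x) = det φ̄ • μ x` with `φ̄` induced on the quotient, while
`φ (μ x) = det (x̄) • φ e₁`; comparing the two gives the characterization, and any automorphism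
preserves `span {e₁}` because it is the image of `μ`. In matrix terms the automorphisms are the
`A` with first column `(det C, 0, …, 0)`, where `C` is the lower right `n × n` block and
`det C ≠ 0`, so they are parametrized by the rest of the first row and `C ∈ GLₙ(ℂ)`, an open
subset of `ℂ^{n + n²}`. -/

theorem Fin.exists_succAbove_comp_perm_of_injective {n : ℕ} {v : Fin n → Fin (n + 1)}
    (hv : Injective v) : ∃ (j : Fin (n + 1)) (σ : Equiv.Perm (Fin n)), v = j.succAbove ∘ σ := by
  obtain ⟨j, hj⟩ : ∃ j, ∀ i, v i ≠ j := by
    by_contra! hsurj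
    simpa using Fintype.card_le_of_surjective v hsurj
  choose σ hσ using fun i => Fin.exists_succAbove_eq (hj i)
  have hσ_inj : Injective σ := fun a b hab => hv <| by rw [← hσ a, ← hσ b, hab]
  exact ⟨j, Equiv.ofBijective σ (Finite.injective_iff_bijective.mp hσ_inj),
    funext fun i => (hσ i).symm⟩

theorem AlternatingMap.ext_basis_succAbove {R M N : Type*} [CommSemiring R] [AddCommMonoid M]
    [AddCommGroup N] [Module R M] [Module R N] {n : ℕ} (b : Module.Basis (Fin (n + 1)) R M)
    {f g : M [⋀^Fin n]→ₗ[R] N} (h : ∀ j : Fin (n + 1), f (b ∘ j.succAbove) = g (b ∘ j.succAbove)) :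
    f = g := by
  refine b.ext_alternating fun v hv => ?_
  obtain ⟨j, σ, rfl⟩ := Fin.exists_succAbove_comp_perm_of_injective hv
  change f ((b ∘ j.succAbove) ∘ σ) = g ((b ∘ j.succAbove) ∘ σ)
  rw [f.map_perm _ σ, g.map_perm _ σ, h]

section QuotDetSMul

variable {R M ι : Type*} [CommRing R] [AddCommGroup M] [Module R M] [Fintype ι] [DecidableEq ι]
  {v : M} (b : Module.Basis ι R (M ⧸ R ∙ v))

noncomputable def quotDetSMul : M [⋀^ι]→ₗ[R] M :=
  (b.det.compLinearMap (R ∙ v).mkQ).smulRight v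

theorem quotDetSMul_apply (x : ι → M) :
    quotDetSMul b x = b.det (fun i => Submodule.Quotient.mk (x i)) • v :=
  rfl

theorem quotDetSMul_comp (ψ : M →ₗ[R] M) (h : R ∙ v ≤ (R ∙ v).comap ψ) (x : ι → M) :
    quotDetSMul b (fun i => ψ (x i)) =
      LinearMap.det ((R ∙ v).mapQ (R ∙ v) ψ h) • quotDetSMul b x := by
  rw [quotDetSMul_apply, quotDetSMul_apply, smul_smul, ← b.det_comp]
  rfl

theorem exists_quotDetSMul_eq : ∃ x : ι → M, quotDetSMul b x = v := by
  choose x hx using fun i => Submodule.Quotient.mk_surjective _ (b i)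
  refine ⟨x, ?_⟩
  rw [quotDetSMul_apply, show (fun i => Submodule.Quotient.mk (x i)) = ⇑b from funext hx,
    b.det_self, one_smul]

theorem commute_quotDetSMul_iff (ψ : M →ₗ[R] M) :
    (∀ x : ι → M, ψ (quotDetSMul b x) = quotDetSMul b fun i => ψ (x i)) ↔
      ∃ h : R ∙ v ≤ (R ∙ v).comap ψ, ψ v = LinearMap.det ((R ∙ v).mapQ (R ∙ v) ψ h) • v := by
  constructor
  · intro hψ
    obtain ⟨x, hx⟩ := exists_quotDetSMul_eq b
    have hψv : ψ v = quotDetSMul b fun i => ψ (x i) := by rw [← hψ, hx]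
    have h : R ∙ v ≤ (R ∙ v).comap ψ := by
      rw [Submodule.span_singleton_le_iff_mem, Submodule.mem_comap, hψv, quotDetSMul_apply]
      exact Submodule.smul_mem _ _ (Submodule.mem_span_singleton_self v)
    exact ⟨h, by rw [hψv, quotDetSMul_comp b ψ h, hx]⟩
  · rintro ⟨h, hv⟩ x
    rw [quotDetSMul_comp b ψ h, quotDetSMul_apply, map_smul, hv, smul_comm]

end QuotDetSMul

section QuotBasis

variable (R : Type*) [CommRing R] (n : ℕ)

theorem ker_funLeft_succ :
    LinearMap.ker (LinearMap.funLeft R R (Fin.succ : Fin n → Fin (n + 1))) =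
      R ∙ (Pi.single 0 1 : Fin (n + 1) → R) := by
  ext v
  simp only [LinearMap.mem_ker, Submodule.mem_span_singleton]
  constructor
  · intro h
    exact ⟨v 0, funext <| Fin.cases (by simp) fun k => by simpa using (congrFun h k).symm⟩
  · rintro ⟨a, rfl⟩
    ext k
    simp

noncomputable def quotSpanSingleZeroEquiv :
    ((Fin (n + 1) → R) ⧸ R ∙ (Pi.single 0 1 : Fin (n + 1) → R)) ≃ₗ[R] (Fin n → R) :=
  (Submodule.quotEquivOfEq _ _ (ker_funLeft_succ R n).symm).trans
    (LinearMap.quotKerEquivOfSurjective _ fun w => ⟨Fin.cons 0 w, rfl⟩)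

theorem quotSpanSingleZeroEquiv_mk (v : Fin (n + 1) → R) :
    quotSpanSingleZeroEquiv R n (Submodule.Quotient.mk v) = fun k => v k.succ :=
  rfl

noncomputable def quotSpanSingleZeroBasis :
    Module.Basis (Fin n) R ((Fin (n + 1) → R) ⧸ R ∙ (Pi.single 0 1 : Fin (n + 1) → R)) :=
  (Pi.basisFun R (Fin n)).map (quotSpanSingleZeroEquiv R n).symm

variable {R n}

theorem quotSpanSingleZeroBasis_apply (l : Fin n) :
    quotSpanSingleZeroBasis R n l = Submodule.Quotient.mk (Pi.single l.succ 1) := by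
  rw [quotSpanSingleZeroBasis, Module.Basis.map_apply, LinearEquiv.symm_apply_eq,
    quotSpanSingleZeroEquiv_mk, Pi.basisFun_apply]
  ext k
  simp [Pi.single_apply]

theorem quotSpanSingleZeroBasis_repr_mk (v : Fin (n + 1) → R) (k : Fin n) :
    (quotSpanSingleZeroBasis R n).repr (Submodule.Quotient.mk v) k = v k.succ :=
  rfl

end QuotBasis

theorem IsB.eq_quotDetSMul {n : ℕ} {μ : AlternatingMap ℂ (nV n) (nV n) (Fin n)} (hμ : IsB n μ) :
    μ = quotDetSMul (quotSpanSingleZeroBasis ℂ n) := by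
  refine AlternatingMap.ext_basis_succAbove (Pi.basisFun ℂ (Fin (n + 1))) fun j => ?_
  have hbt : ⇑(Pi.basisFun ℂ (Fin (n + 1))) ∘ j.succAbove = bt n j := by
    ext k : 1
    simp [bt, sb]
  rw [hbt, quotDetSMul_apply]
  rcases eq_or_ne j 0 with rfl | hj
  · have hmk : (fun k => Submodule.Quotient.mk (bt n 0 k)) = ⇑(quotSpanSingleZeroBasis ℂ n) := by
      ext k : 1
      simp [bt, sb, quotSpanSingleZeroBasis_apply]
    rw [hμ.1, hmk, Module.Basis.det_self, one_smul]
    rfl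
  · obtain ⟨k, hk⟩ := Fin.exists_succAbove_eq hj.symm
    have hzero : Submodule.Quotient.mk (p := ℂ ∙ sb n 0) (bt n j k) = 0 := by
      rw [Submodule.Quotient.mk_eq_zero, bt, hk]
      exact Submodule.mem_span_singleton_self _
    rw [hμ.2 j hj, AlternatingMap.map_coord_zero _ k hzero, zero_smul]

section Matrix

variable {R : Type*} [CommRing R] {n : ℕ}

theorem Matrix.det_eq_mul_det_submatrix_succ_of_col_zero (A : Matrix (Fin (n + 1)) (Fin (n + 1)) R)
    (h0 : ∀ k : Fin n, A k.succ 0 = 0) :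
    A.det = A 0 0 * (A.submatrix Fin.succ Fin.succ).det := by
  simp [Matrix.det_succ_column_zero, Fin.sum_univ_succ, h0]

theorem det_mapQ_toLin' (A : Matrix (Fin (n + 1)) (Fin (n + 1)) R)
    (h : R ∙ (Pi.single 0 1 : Fin (n + 1) → R) ≤ (R ∙ Pi.single 0 1).comap (Matrix.toLin' A)) :
    LinearMap.det ((R ∙ Pi.single 0 1).mapQ (R ∙ Pi.single 0 1) (Matrix.toLin' A) h) =
      (A.submatrix Fin.succ Fin.succ).det := by
  rw [← LinearMap.det_toMatrix (quotSpanSingleZeroBasis R n)]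
  congr 1
  ext k l
  simp [LinearMap.toMatrix_apply, quotSpanSingleZeroBasis_apply, quotSpanSingleZeroBasis_repr_mk]

theorem mulVec_commute_quotDetSMul_iff (A : Matrix (Fin (n + 1)) (Fin (n + 1)) R) :
    (∀ x : Fin n → Fin (n + 1) → R, A.mulVec (quotDetSMul (quotSpanSingleZeroBasis R n) x) =
        quotDetSMul (quotSpanSingleZeroBasis R n) fun i => A.mulVec (x i)) ↔
      (∀ k : Fin n, A k.succ 0 = 0) ∧ A 0 0 = (A.submatrix Fin.succ Fin.succ).det := by
  have hcol : A.mulVec (Pi.single 0 1) = (A.submatrix Fin.succ Fin.succ).det • Pi.single 0 1 ↔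
      (∀ k : Fin n, A k.succ 0 = 0) ∧ A 0 0 = (A.submatrix Fin.succ Fin.succ).det := by
    simp [funext_iff, Fin.forall_fin_succ, and_comm]
  simp only [← Matrix.toLin'_apply]
  rw [commute_quotDetSMul_iff, ← hcol]
  constructor
  · rintro ⟨h, hA⟩
    rwa [det_mapQ_toLin'] at hA
  · intro hA
    refine ⟨?_, by rw [det_mapQ_toLin', Matrix.toLin'_apply, hA]⟩
    rw [Submodule.span_singleton_le_iff_mem, Submodule.mem_comap, Matrix.toLin'_apply, hA]
    exact Submodule.smul_mem _ _ (Submodule.mem_span_singleton_self _)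

end Matrix

section AutMat

variable {n : ℕ} {μ : AlternatingMap ℂ (nV n) (nV n) (Fin n)}

theorem IsB.mem_autMat_iff (hμ : IsB n μ) (A : Matrix (Fin (n + 1)) (Fin (n + 1)) ℂ) :
    (IsUnit A.det ∧ ∀ x : Fin n → nV n, A.mulVec (μ x) = μ fun i => A.mulVec (x i)) ↔
      (∀ k : Fin n, A k.succ 0 = 0) ∧ A 0 0 = (A.submatrix Fin.succ Fin.succ).det ∧
        (A.submatrix Fin.succ Fin.succ).det ≠ 0 := by
  rw [hμ.eq_quotDetSMul, mulVec_commute_quotDetSMul_iff, isUnit_iff_ne_zero]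
  constructor
  · rintro ⟨hdet, h0, h00⟩
    refine ⟨h0, h00, fun hC => hdet ?_⟩
    rw [A.det_eq_mul_det_submatrix_succ_of_col_zero h0, hC, mul_zero]
  · rintro ⟨h0, h00, hC⟩
    refine ⟨?_, h0, h00⟩
    rw [A.det_eq_mul_det_submatrix_succ_of_col_zero h0, h00]
    exact mul_ne_zero hC hC

-- `[[det C, r], [0, C]]`
def matrixOfBlocks (r : Fin n → ℂ) (C : Matrix (Fin n) (Fin n) ℂ) :
    Matrix (Fin (n + 1)) (Fin (n + 1)) ℂ :=
  Matrix.of fun i j => Fin.cases (Fin.cases C.det r j) (fun k => Fin.cases 0 (C k) j) i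

variable (r : Fin n → ℂ) (C : Matrix (Fin n) (Fin n) ℂ)

@[simp] theorem matrixOfBlocks_zero_zero : matrixOfBlocks r C 0 0 = C.det := rfl
@[simp] theorem matrixOfBlocks_zero_succ (l : Fin n) : matrixOfBlocks r C 0 l.succ = r l := rfl
@[simp] theorem matrixOfBlocks_succ_zero (k : Fin n) : matrixOfBlocks r C k.succ 0 = 0 := rfl
@[simp] theorem matrixOfBlocks_succ_succ (k l : Fin n) :
    matrixOfBlocks r C k.succ l.succ = C k l := rfl

theorem continuous_matrixOfBlocks :
    Continuous fun p : (Fin n → ℂ) × Matrix (Fin n) (Fin n) ℂ => matrixOfBlocks p.1 p.2 := by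
  refine continuous_pi fun i => continuous_pi fun j => ?_
  cases i using Fin.cases <;> cases j using Fin.cases <;>
    simp only [matrixOfBlocks, Matrix.of_apply, Fin.cases_zero, Fin.cases_succ]
  exacts [continuous_snd.matrix_det, by fun_prop, continuous_const, by fun_prop]

noncomputable def IsB.autMatHomeomorph (hμ : IsB n μ) :
    AutMat n μ ≃ₜ {p : (Fin n → ℂ) × Matrix (Fin n) (Fin n) ℂ | p.2.det ≠ 0} where
  toFun A := ⟨(fun l => A.1 0 l.succ, A.1.submatrix Fin.succ Fin.succ),
    ((hμ.mem_autMat_iff A.1).mp A.2).2.2⟩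
  invFun p := ⟨matrixOfBlocks p.1.1 p.1.2, (hμ.mem_autMat_iff _).mpr ⟨fun _ => rfl, rfl, p.2⟩⟩
  left_inv A := by
    obtain ⟨h0, h00, -⟩ := (hμ.mem_autMat_iff A.1).mp A.2
    refine Subtype.ext <| Matrix.ext fun i j => ?_
    cases i using Fin.cases <;> cases j using Fin.cases <;> simp [h0, h00]
  right_inv p := rfl
  continuous_toFun := by
    refine Continuous.subtype_mk (Continuous.prodMk ?_ ?_) _
    · exact continuous_pi fun l => (continuous_apply_apply 0 l.succ).comp continuous_subtype_val
    · fun_prop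
  continuous_invFun := (continuous_matrixOfBlocks.comp continuous_subtype_val).subtype_mk _

end AutMat

theorem automorphisms_of_B_general (n : ℕ)
    (μ : AlternatingMap ℂ (nV n) (nV n) (Fin n)) (hμ : IsB n μ) :
    (∀ φ : nV n ≃ₗ[ℂ] nV n,
      (∀ x : Fin n → nV n, φ (μ x) = μ fun i => φ (x i)) ↔
        ∃ h : span ℂ {sb n 0} ≤ (span ℂ {sb n 0}).comap (φ : nV n →ₗ[ℂ] nV n),
          φ (sb n 0) =
            LinearMap.det
              ((span ℂ {sb n 0}).mapQ (span ℂ {sb n 0}) (φ : nV n →ₗ[ℂ] nV n) h) • sb n 0) ∧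
    ∃ (a : AutMat n μ) (U : Set (AutMat n μ)) (S : Set (Fin (n ^ 2 + n) → ℂ)),
      a ∈ U ∧ IsOpen U ∧ IsOpen S ∧ Nonempty (U ≃ₜ S) := by
  refine ⟨fun φ => hμ.eq_quotDetSMul ▸ commute_quotDetSMul_iff _ (φ : nV n →ₗ[ℂ] nV n), ?_⟩
  have hdim : Module.finrank ℂ ((Fin n → ℂ) × Matrix (Fin n) (Fin n) ℂ) =
      Module.finrank ℂ (Fin (n ^ 2 + n) → ℂ) := by
    simp only [Module.finrank_prod, Module.finrank_matrix, Module.finrank_fin_fun,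
      Module.finrank_self, Fintype.card_fin]
    ring
  let e := hμ.autMatHomeomorph
  let L := (ContinuousLinearEquiv.ofFinrankEq hdim).toHomeomorph
  have hopen : IsOpen {p : (Fin n → ℂ) × Matrix (Fin n) (Fin n) ℂ | p.2.det ≠ 0} :=
    isOpen_ne_fun continuous_snd.matrix_det continuous_const
  exact ⟨e.symm ⟨(0, 1), by simp⟩, Set.univ, L '' _, trivial, isOpen_univ, L.isOpenMap _ hopen,
    ⟨(Homeomorph.Set.univ _).trans (e.trans (L.image _))⟩⟩

/-- An invertible linear map `φ` is an automorphism of `B` iff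
`φ e₁ ∈ span{e₁}` and the scalar `λ` with `φ e₁ = λ e₁` equals the determinant of the
endomorphism of `V ⧸ span{e₁}` induced by `φ`.  Consequently the automorphism group of
`B` has dimension `n² + n`: some point of it has a neighbourhood homeomorphic to an open
subset of `ℂ^{n²+n}`. -/
theorem automorphisms_of_B (n : ℕ) (hn : 2 ≤ n)
    (μ : AlternatingMap ℂ (nV n) (nV n) (Fin n)) (hμ : IsB n μ) :
    (∀ φ : nV n ≃ₗ[ℂ] nV n,
      (∀ x : Fin n → nV n, φ (μ x) = μ fun i => φ (x i)) ↔
        ∃ h : span ℂ {sb n 0} ≤ (span ℂ {sb n 0}).comap (φ : nV n →ₗ[ℂ] nV n),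
          φ (sb n 0) =
            LinearMap.det
              ((span ℂ {sb n 0}).mapQ (span ℂ {sb n 0}) (φ : nV n →ₗ[ℂ] nV n) h) • sb n 0) ∧
    ∃ (a : AutMat n μ) (U : Set (AutMat n μ)) (S : Set (Fin (n ^ 2 + n) → ℂ)),
      a ∈ U ∧ IsOpen U ∧ IsOpen S ∧ Nonempty (U ≃ₜ S) :=
  automorphisms_of_B_general n μ hμ
end
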